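/- arXiv:2602.12868 — 9 statements merged into one kernel-verified Lean document; each statement's English description precedes it below -/
import Mathlib

section
/- For any vectors a₁, a₂ ∈ ℂ² satisfying ‖a₁‖_∞ ≤ 1 and ‖a₂‖_∞ ≤ 1, there exists a unimodular vector x ∈ ℂ² such that |⟨x, a₁⟩| ≤ √2 and |⟨x, a₂⟩| ≤ √2. -/
open Complex ComplexConjugate

/-! Take `x = (u, 1)` with `|u| = 1`. Then `⟨x, a⟩ = u a₀‾ + a₁‾`, and
`|z + y|² = |z|² + |y|² + 2 Re (z ȳ) ≤ 2` as soon as `|z|, |y| ≤ 1` and `Re (z ȳ) ≤ 0`.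
So it suffices to rotate the two numbers `wₖ = aₖ₀‾ aₖ₁` simultaneously into the closed left
half-plane: first make `u w₁` purely imaginary, then flip the sign of `u` if `Re (u w₂) > 0`. -/

theorem Complex.exists_norm_eq_one_re_mul_eq_zero (w : ℂ) :
    ∃ u : ℂ, ‖u‖ = 1 ∧ (u * w).re = 0 := by
  rcases eq_or_ne w 0 with rfl | hw
  · exact ⟨1, by simp, by simp⟩
  have hnorm : (‖w‖ : ℂ) ≠ 0 := ofReal_ne_zero.mpr (norm_ne_zero_iff.mpr hw)
  refine ⟨I * conj w / ‖w‖, by simp [hw], ?_⟩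
  have hmul : I * conj w / ‖w‖ * w = I * ‖w‖ := by
    rw [div_mul_eq_mul_div, mul_assoc, conj_mul', div_eq_iff hnorm]
    ring
  simp [hmul]

theorem Complex.exists_norm_eq_one_re_mul_nonpos (w₁ w₂ : ℂ) :
    ∃ u : ℂ, ‖u‖ = 1 ∧ (u * w₁).re ≤ 0 ∧ (u * w₂).re ≤ 0 := by
  obtain ⟨u, hu, hu₁⟩ := exists_norm_eq_one_re_mul_eq_zero w₁
  rcases le_or_gt (u * w₂).re 0 with hu₂ | hu₂
  · exact ⟨u, hu, hu₁.le, hu₂⟩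
  · exact ⟨-u, by simpa using hu, by simp [hu₁],
      by simpa only [neg_mul, neg_re, neg_nonpos] using hu₂.le⟩

theorem Complex.norm_add_le_sqrt_two {z y : ℂ} (hz : ‖z‖ ≤ 1) (hy : ‖y‖ ≤ 1)
    (h : (z * conj y).re ≤ 0) : ‖z + y‖ ≤ √2 := by
  rw [norm_def]
  gcongr
  rw [normSq_add, normSq_eq_norm_sq, normSq_eq_norm_sq]
  nlinarith [norm_nonneg z, norm_nonneg y]

theorem Complex.norm_mul_conj_add_conj_le_sqrt_two {u a b : ℂ} (hu : ‖u‖ = 1)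
    (ha : ‖a‖ ≤ 1) (hb : ‖b‖ ≤ 1) (h : (u * (conj a * b)).re ≤ 0) :
    ‖u * conj a + conj b‖ ≤ √2 :=
  norm_add_le_sqrt_two (by simpa [hu] using ha) (by simpa using hb)
    (by simpa [mul_assoc] using h)

/-- For any vectors `a₁, a₂ ∈ ℂ²` with `‖a₁‖_∞ ≤ 1` and `‖a₂‖_∞ ≤ 1`, there exists a
unimodular vector `x ∈ ℂ²` such that `|⟨x, a₁⟩| ≤ √2` and `|⟨x, a₂⟩| ≤ √2`. -/
theorem stmt_0 (a₁ a₂ : Fin 2 → ℂ)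
    (h₁ : ∀ i, ‖a₁ i‖ ≤ 1) (h₂ : ∀ i, ‖a₂ i‖ ≤ 1) :
    ∃ x : Fin 2 → ℂ, (∀ i, ‖x i‖ = 1) ∧
      ‖∑ i, x i * (starRingEnd ℂ) (a₁ i)‖ ≤ Real.sqrt 2 ∧
      ‖∑ i, x i * (starRingEnd ℂ) (a₂ i)‖ ≤ Real.sqrt 2 := by
  obtain ⟨u, hu, hu₁, hu₂⟩ :=
    exists_norm_eq_one_re_mul_nonpos (conj (a₁ 0) * a₁ 1) (conj (a₂ 0) * a₂ 1)
  refine ⟨![u, 1], fun i => by fin_cases i <;> simp [hu], ?_, ?_⟩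
  · simpa [Fin.sum_univ_two] using norm_mul_conj_add_conj_le_sqrt_two hu (h₁ 0) (h₁ 1) hu₁
  · simpa [Fin.sum_univ_two] using norm_mul_conj_add_conj_le_sqrt_two hu (h₂ 0) (h₂ 1) hu₂
end

section
/- For every ℂ-linear homeomorphism A from ℓ₁²(ℂ) onto ℓ_∞²(ℂ), one has ‖A‖ · ‖A⁻¹‖ ≥ √2, where ‖A‖ is the operator norm of A from ℓ₁²(ℂ) to ℓ_∞²(ℂ) and ‖A⁻¹‖ is the operator norm of its inverse from ℓ_∞²(ℂ) to ℓ₁²(ℂ). In particular, the Banach–Mazur distance between ℓ₁²(ℂ) and ℓ_∞²(ℂ) is at least √2. -/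
/-!
Let `e₀, e₁` be the unit vectors of `ℓ₁²` and `u = A e₀`, `v = A e₁`, so `‖u‖∞, ‖v‖∞ ≤ ‖A‖`.
Two complex numbers can be rotated simultaneously into the closed left half-plane, so there is a
unimodular `l` with `Re (l ⬝ conj uⱼ ⬝ vⱼ) ≤ 0` for both coordinates `j`. Then
`|uⱼ + l vⱼ|² ≤ |uⱼ|² + |vⱼ|² ≤ 2‖A‖²`, i.e. `‖A (e₀ + l e₁)‖∞ ≤ √2 ‖A‖`, while
`‖e₀ + l e₁‖₁ = 2`. Hence `2 ≤ ‖A⁻¹‖ ⬝ √2 ‖A‖`.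
-/

open scoped ENNReal ComplexConjugate
open Complex

local notation "ℓ¹" => PiLp 1 (fun _ : Fin 2 => ℂ)
local notation "ℓ^∞" => PiLp ∞ (fun _ : Fin 2 => ℂ)

theorem norm_add_sq_le_of_re_inner_nonpos {𝕜 E : Type*} [RCLike 𝕜] [SeminormedAddCommGroup E]
    [InnerProductSpace 𝕜 E] {x y : E} (h : RCLike.re (inner 𝕜 x y) ≤ 0) :
    ‖x + y‖ ^ 2 ≤ ‖x‖ ^ 2 + ‖y‖ ^ 2 := by
  rw [norm_add_sq (𝕜 := 𝕜)]
  linarith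

theorem Complex.exists_norm_eq_one_re_mul_nonpos_s6 (z w : ℂ) :
    ∃ l : ℂ, ‖l‖ = 1 ∧ (l * z).re ≤ 0 ∧ (l * w).re ≤ 0 := by
  set μ := I * exp (-arg z * I)
  have hμ : ‖μ‖ = 1 := by simp [μ, ← ofReal_neg, norm_exp_ofReal_mul_I]
  have hμz : (μ * z).re = 0 := by
    have : μ * z = I * ‖z‖ := by
      conv_lhs => rw [← norm_mul_exp_arg_mul_I z]
      rw [show μ * (‖z‖ * exp (arg z * I)) = I * ‖z‖ * exp (-arg z * I + arg z * I) by
        rw [exp_add]; ring]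
      simp
    simp [this]
  rcases le_total (μ * w).re 0 with h | h
  · exact ⟨μ, hμ, hμz.le, h⟩
  · exact ⟨-μ, by rwa [norm_neg], by simp [hμz], by simpa using h⟩

theorem PiLp.norm_single_add_single_of_L1 {ι : Type*} [Fintype ι] [DecidableEq ι]
    {β : ι → Type*} [∀ i, SeminormedAddCommGroup (β i)] {i j : ι} (hij : i ≠ j)
    (a : β i) (b : β j) : ‖PiLp.single 1 i a + PiLp.single 1 j b‖ = ‖a‖ + ‖b‖ := by
  rw [PiLp.norm_eq_of_L1, Fintype.sum_eq_add i j hij]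
  · simp [hij, hij.symm]
  · rintro k ⟨hki, hkj⟩
    simp [hki, hkj]

theorem exists_norm_eq_one_norm_add_smul_le (u v : ℓ^∞) :
    ∃ l : ℂ, ‖l‖ = 1 ∧ ‖u + l • v‖ ≤ √2 * max ‖u‖ ‖v‖ := by
  obtain ⟨l, hl, h₀, h₁⟩ :=
    Complex.exists_norm_eq_one_re_mul_nonpos_s6 (conj (u 0) * v 0) (conj (u 1) * v 1)
  refine ⟨l, hl, ?_⟩
  have hcoord (j : Fin 2) (hj : (l * (conj (u j) * v j)).re ≤ 0) :
      ‖u j + l * v j‖ ≤ √2 * max ‖u‖ ‖v‖ := by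
    have hu := (PiLp.norm_apply_le u j).trans (le_max_left ‖u‖ ‖v‖)
    have hv := (PiLp.norm_apply_le v j).trans (le_max_right ‖u‖ ‖v‖)
    have hsq := norm_add_sq_le_of_re_inner_nonpos (𝕜 := ℂ) (x := u j) (y := l * v j)
      (by rwa [RCLike.inner_apply', mul_left_comm])
    rw [norm_mul, hl, one_mul] at hsq
    refine (pow_le_pow_iff_left₀ (norm_nonneg _) (by positivity) two_ne_zero).mp ?_
    rw [mul_pow, Real.sq_sqrt zero_le_two]
    nlinarith [pow_le_pow_left₀ (norm_nonneg _) hu 2, pow_le_pow_left₀ (norm_nonneg _) hv 2]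
  rw [PiLp.norm_eq_ciSup]
  refine ciSup_le fun j => ?_
  fin_cases j
  · simpa using hcoord 0 h₀
  · simpa using hcoord 1 h₁

/-- Every ℂ-linear homeomorphism `A` from `ℓ₁²(ℂ)` onto `ℓ_∞²(ℂ)` satisfies
`‖A‖ ⬝ ‖A⁻¹‖ ≥ √2`; in particular the Banach–Mazur distance between `ℓ₁²(ℂ)` and `ℓ_∞²(ℂ)`
is at least `√2`. -/
theorem stmt_6 (A : PiLp 1 (fun _ : Fin 2 => ℂ) ≃L[ℂ] PiLp ⊤ (fun _ : Fin 2 => ℂ)) :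
    Real.sqrt 2 ≤
      ‖(A : PiLp 1 (fun _ : Fin 2 => ℂ) →L[ℂ] PiLp ⊤ (fun _ : Fin 2 => ℂ))‖ *
        ‖(A.symm : PiLp ⊤ (fun _ : Fin 2 => ℂ) →L[ℂ] PiLp 1 (fun _ : Fin 2 => ℂ))‖ := by
  set T : ℓ¹ →L[ℂ] ℓ^∞ := (A : ℓ¹ →L[ℂ] ℓ^∞)
  set S : ℓ^∞ →L[ℂ] ℓ¹ := (A.symm : ℓ^∞ →L[ℂ] ℓ¹)
  let e (i : Fin 2) : ℓ¹ := PiLp.single 1 i 1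
  have hTe (i : Fin 2) : ‖T (e i)‖ ≤ ‖T‖ := by simpa [e] using T.le_opNorm (e i)
  obtain ⟨l, hl, hle⟩ := exists_norm_eq_one_norm_add_smul_le (T (e 0)) (T (e 1))
  have key : √2 * √2 ≤ √2 * (‖T‖ * ‖S‖) := calc
    √2 * √2 = ‖e 0 + l • e 1‖ := by
      have hsmul : l • e 1 = PiLp.single 1 1 l := by ext j; simp [e]
      rw [hsmul, PiLp.norm_single_add_single_of_L1 zero_ne_one, hl, norm_one,
        Real.mul_self_sqrt zero_le_two]
      norm_num
    _ = ‖S (T (e 0 + l • e 1))‖ := by simp [S, T]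
    _ ≤ ‖S‖ * ‖T (e 0 + l • e 1)‖ := S.le_opNorm _
    _ ≤ ‖S‖ * (√2 * ‖T‖) := by
      rw [map_add, map_smul]
      gcongr
      exact hle.trans (by gcongr; exact max_le (hTe 0) (hTe 1))
    _ = √2 * (‖T‖ * ‖S‖) := by ring
  exact le_of_mul_le_mul_left key (by positivity)
end

section
/- For any complex 2×2 matrix A, the operator norm of A from ℓ_∞²(ℂ) to ℓ₁²(ℂ) satisfies ‖A‖_{∞→1} ≥ 2·√|det A|. -/
open scoped ENNReal Matrix

/-!
Test the operator on `(1, z)` with `|z| = 1`: the image has `ℓ₁`-norm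
`|a + bz| + |c + dz| ≥ 2 √(|a + bz| |c + dz|)`, and `(a + bz)(c + dz)` is a quadratic in `z` with
discriminant `(ad - bc)²`. Any quadratic `az² + bz + c` has a unimodular `z` with
`|az² + bz + c|² ≥ |b² - 4ac|`: rotate `ω` so that `c` and `aω²` point the same way; by the
parallelogram law one of `z = ±ω` gives at least `|c + aω²|² + |bω|² = (|a| + |c|)² + |b|²`.
-/

open Complex in
theorem Complex.exists_norm_eq_one_norm_add_mul_sq (u v : ℂ) :
    ∃ ω : ℂ, ‖ω‖ = 1 ∧ ‖u + v * ω ^ 2‖ = ‖u‖ + ‖v‖ := by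
  set θ : ℝ := (arg u - arg v) / 2
  refine ⟨exp (θ * I), norm_exp_ofReal_mul_I θ, ?_⟩
  have hv : v * exp (θ * I) ^ 2 = ‖v‖ * exp (arg u * I) :=
    calc v * exp (θ * I) ^ 2 = ‖v‖ * exp (arg v * I) * exp (2 * θ * I) := by
          rw [norm_mul_exp_arg_mul_I, ← exp_nat_mul]; ring_nf
      _ = ‖v‖ * exp (arg u * I) := by
          rw [mul_assoc, ← exp_add]; simp only [θ]; push_cast; ring_nf
  have hsum : u + v * exp (θ * I) ^ 2 = ((‖u‖ + ‖v‖ : ℝ) : ℂ) * exp (arg u * I) := by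
    rw [hv]; nth_rewrite 1 [← norm_mul_exp_arg_mul_I u]; push_cast; ring
  rw [hsum, norm_mul, norm_exp_ofReal_mul_I, mul_one, Complex.norm_real,
    Real.norm_of_nonneg (by positivity)]

theorem sq_norm_add_sq_norm_le_max {𝕜 E : Type*} [RCLike 𝕜] [NormedAddCommGroup E]
    [InnerProductSpace 𝕜 E] (u v : E) :
    ‖u‖ ^ 2 + ‖v‖ ^ 2 ≤ max (‖u + v‖ ^ 2) (‖u - v‖ ^ 2) := by
  have := parallelogram_law_with_norm 𝕜 u v
  rcases le_total (‖u + v‖ ^ 2) (‖u - v‖ ^ 2) with h | h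
  · rw [max_eq_right h]; linarith
  · rw [max_eq_left h]; linarith

theorem Complex.exists_norm_eq_one_norm_discrim_le (a b c : ℂ) :
    ∃ z : ℂ, ‖z‖ = 1 ∧ ‖discrim a b c‖ ≤ ‖a * z ^ 2 + b * z + c‖ ^ 2 := by
  obtain ⟨ω, hω, hsum⟩ := exists_norm_eq_one_norm_add_mul_sq c a
  have hbound : ‖discrim a b c‖ ≤ ‖c + a * ω ^ 2‖ ^ 2 + ‖b * ω‖ ^ 2 := by
    rw [hsum, norm_mul, hω, mul_one, discrim]
    calc ‖b ^ 2 - 4 * a * c‖ ≤ ‖b ^ 2‖ + ‖4 * a * c‖ := norm_sub_le _ _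
      _ = ‖b‖ ^ 2 + 4 * ‖a‖ * ‖c‖ := by rw [norm_pow, norm_mul, norm_mul]; norm_num
      _ ≤ (‖c‖ + ‖a‖) ^ 2 + ‖b‖ ^ 2 := by nlinarith [sq_nonneg (‖c‖ - ‖a‖)]
  rcases le_max_iff.mp (hbound.trans (sq_norm_add_sq_norm_le_max (𝕜 := ℂ) _ _)) with h | h
  · exact ⟨ω, hω, by rwa [show a * ω ^ 2 + b * ω + c = c + a * ω ^ 2 + b * ω by ring]⟩
  · refine ⟨-ω, by rwa [norm_neg], ?_⟩
    rwa [show a * (-ω) ^ 2 + b * -ω + c = c + a * ω ^ 2 - b * ω by ring]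

theorem Complex.exists_norm_eq_one_norm_sub_le_mul (a b c d : ℂ) :
    ∃ z : ℂ, ‖z‖ = 1 ∧ ‖a * d - b * c‖ ≤ ‖a + b * z‖ * ‖c + d * z‖ := by
  obtain ⟨z, hz, h⟩ := exists_norm_eq_one_norm_discrim_le (b * d) (a * d + b * c) (a * c)
  have hdiscrim : discrim (b * d) (a * d + b * c) (a * c) = (a * d - b * c) ^ 2 := by
    rw [discrim]; ring
  have hfactor : b * d * z ^ 2 + (a * d + b * c) * z + a * c = (a + b * z) * (c + d * z) := by ring
  rw [hdiscrim, hfactor, norm_pow, norm_mul] at h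
  exact ⟨z, hz, (pow_le_pow_iff_left₀ (norm_nonneg _) (by positivity) two_ne_zero).mp h⟩

theorem Real.two_mul_sqrt_le_add {x p q : ℝ} (hp : 0 ≤ p) (hq : 0 ≤ q) (h : x ≤ p * q) :
    2 * √x ≤ p + q := by
  have : √x ≤ (p + q) / 2 :=
    Real.sqrt_le_iff.mpr ⟨by positivity, by nlinarith [sq_nonneg (p - q)]⟩
  linarith

variable {𝕜 m n : Type*} [RCLike 𝕜] [Fintype m] [Fintype n]

noncomputable def Matrix.toPiLpCLM (p q : ℝ≥0∞) [Fact (1 ≤ p)] [Fact (1 ≤ q)] (A : Matrix m n 𝕜) :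
    PiLp p (fun _ : n => 𝕜) →L[𝕜] PiLp q (fun _ : m => 𝕜) :=
  LinearMap.toContinuousLinearMap
    ((WithLp.linearEquiv q 𝕜 (m → 𝕜)).symm.toLinearMap ∘ₗ A.mulVecLin ∘ₗ
      (WithLp.linearEquiv p 𝕜 (n → 𝕜)).toLinearMap)

theorem Matrix.norm_toLp_mulVec_le (p q : ℝ≥0∞) [Fact (1 ≤ p)] [Fact (1 ≤ q)] (A : Matrix m n 𝕜)
    (v : n → 𝕜) : ‖WithLp.toLp q (A *ᵥ v)‖ ≤ ‖A.toPiLpCLM p q‖ * ‖WithLp.toLp p v‖ :=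
  (A.toPiLpCLM p q).le_opNorm (WithLp.toLp p v)

/-- For every complex `2 × 2` matrix `A`, the operator norm of `A` from `ℓ_∞²(ℂ)` to `ℓ₁²(ℂ)`
satisfies `‖A‖_{∞→1} ≥ 2√|det A|`. -/
theorem stmt_9 (A : Matrix (Fin 2) (Fin 2) ℂ) :
    2 * Real.sqrt ‖A.det‖ ≤
      ‖(LinearMap.toContinuousLinearMap
        ((WithLp.linearEquiv 1 ℂ (Fin 2 → ℂ)).symm.toLinearMap ∘ₗ A.mulVecLin ∘ₗ
          (WithLp.linearEquiv ⊤ ℂ (Fin 2 → ℂ)).toLinearMap :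
        PiLp ⊤ (fun _ : Fin 2 => ℂ) →ₗ[ℂ] PiLp 1 (fun _ : Fin 2 => ℂ)))‖ := by
  change 2 * √‖A.det‖ ≤ ‖A.toPiLpCLM ⊤ 1‖
  obtain ⟨z, hz, hdet⟩ := Complex.exists_norm_eq_one_norm_sub_le_mul (A 0 0) (A 0 1) (A 1 0) (A 1 1)
  have hunit : ‖![(1 : ℂ), z]‖ = 1 :=
    le_antisymm ((pi_norm_le_iff_of_nonneg zero_le_one).mpr (by simp [Fin.forall_fin_two, hz]))
      (by simpa using norm_le_pi_norm ![(1 : ℂ), z] 0)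
  calc 2 * √‖A.det‖ ≤ ‖A 0 0 + A 0 1 * z‖ + ‖A 1 0 + A 1 1 * z‖ :=
        Real.two_mul_sqrt_le_add (norm_nonneg _) (norm_nonneg _) (by rwa [Matrix.det_fin_two])
    _ = ‖WithLp.toLp 1 (A *ᵥ ![1, z])‖ := by
        simp [PiLp.norm_eq_of_L1, Fin.sum_univ_two]
    _ ≤ ‖A.toPiLpCLM ⊤ 1‖ * ‖WithLp.toLp ⊤ ![1, z]‖ := A.norm_toLp_mulVec_le ⊤ 1 ![1, z]
    _ = ‖A.toPiLpCLM ⊤ 1‖ := by rw [PiLp.norm_toLp, hunit, mul_one]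
end

section
/- Let n ≥ 1 and suppose that every ℂ-linear homeomorphism A from ℓ₁ⁿ(ℂ) onto ℓ_∞ⁿ(ℂ) satisfies ‖A‖ · ‖A⁻¹‖ ≥ √n (i.e. the Banach–Mazur distance between ℓ₁ⁿ(ℂ) and ℓ_∞ⁿ(ℂ) equals √n). Then for every complex n×n Hadamard matrix H there exists a unimodular vector x ∈ ℂⁿ such that every coordinate of the vector Hx has modulus √n, i.e. (1/√n)·Hx is unimodular. -/
/-!
Let `A = n⁻¹ Hᴴ`, whose inverse is `H`. Since the entries of `A` have modulus `1/n`,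
`‖A : ℓ₁ → ℓ_∞‖ ≤ 1/n`, so the hypothesis gives `‖H : ℓ_∞ → ℓ₁‖ ≥ n√n`; by compactness
this norm is attained at some `x` in the unit ball of `ℓ_∞`. On the other hand Cauchy–Schwarz
and `Hᴴ H = n` give `‖H x‖₁ ≤ √n ‖H x‖₂ = n ‖x‖₂ ≤ n√n`, so both inequalities are
equalities: all `|(H x)ᵢ|` equal `√n` and all `|xⱼ|` equal `1`.
-/

open scoped ENNReal
open Finset Matrix

theorem eq_of_sum_sq_le_of_le_sum {ι : Type*} [Fintype ι] {a : ι → ℝ} {c : ℝ} (hc : 0 ≤ c)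
    (hsq : ∑ i, a i ^ 2 ≤ Fintype.card ι * c ^ 2) (hsum : Fintype.card ι * c ≤ ∑ i, a i)
    (i : ι) : a i = c := by
  have hdev : ∑ i, (a i - c) ^ 2 ≤ 0 := by
    have hexpand :
        ∑ i, (a i - c) ^ 2 = ∑ i, a i ^ 2 - 2 * c * ∑ i, a i + Fintype.card ι * c ^ 2 := by
      simp only [sub_sq, sum_add_distrib, sum_sub_distrib, sum_const, card_univ, nsmul_eq_mul,
        ← sum_mul, ← mul_sum]
      ring
    rw [hexpand]
    nlinarith
  have hi := (sum_eq_zero_iff_of_nonneg fun i _ => sq_nonneg (a i - c)).mp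
    (le_antisymm hdev (sum_nonneg fun i _ => sq_nonneg _)) i (mem_univ i)
  exact sub_eq_zero.mp (pow_eq_zero_iff two_ne_zero |>.mp hi)

theorem ContinuousLinearMap.exists_norm_le_one_opNorm_le_norm_apply {𝕜 E F : Type*}
    [NontriviallyNormedField 𝕜] [NormedAlgebra ℝ 𝕜] [NormedAddCommGroup E] [NormedSpace 𝕜 E]
    [ProperSpace E] [SeminormedAddCommGroup F] [NormedSpace 𝕜 F] (f : E →L[𝕜] F) :
    ∃ x, ‖x‖ ≤ 1 ∧ ‖f‖ ≤ ‖f x‖ := by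
  obtain ⟨x, hx, hmax⟩ := (isCompact_closedBall (0 : E) 1).exists_isMaxOn
    ⟨0, Metric.mem_closedBall_self zero_le_one⟩ f.continuous.norm.continuousOn
  refine ⟨x, by simpa using hx, f.opNorm_le_of_unit_norm (norm_nonneg _) fun y hy => ?_⟩
  exact hmax (by simp [hy])

namespace Matrix

theorem conjTranspose_mul_self_eq_card_smul_one {ι : Type*} [Fintype ι] [DecidableEq ι]
    {H : Matrix ι ι ℂ} (hmod : ∀ i j, ‖H i j‖ = 1)
    (horth : ∀ j k, j ≠ k → ∑ i, H i j * (starRingEnd ℂ) (H i k) = 0) :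
    Hᴴ * H = (Fintype.card ι : ℂ) • 1 := by
  ext k j
  rw [mul_apply, smul_apply, smul_eq_mul]
  rcases eq_or_ne k j with rfl | hkj
  · simp [Complex.conj_mul', hmod]
  · simpa [one_apply_ne hkj, mul_comm] using horth j k hkj.symm

theorem star_dotProduct_self_eq_sum_norm_sq {𝕜 n : Type*} [RCLike 𝕜] [Fintype n]
    (v : n → 𝕜) : star v ⬝ᵥ v = ((∑ i, ‖v i‖ ^ 2 : ℝ) : 𝕜) := by
  simp [dotProduct, RCLike.conj_mul]

theorem sum_norm_sq_mulVec_of_conjTranspose_mul_self {𝕜 m n : Type*} [RCLike 𝕜]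
    [Fintype m] [Fintype n] [DecidableEq n] {H : Matrix m n 𝕜} {c : ℝ}
    (hH : Hᴴ * H = (c : 𝕜) • 1) (x : n → 𝕜) :
    ∑ i, ‖(H *ᵥ x) i‖ ^ 2 = c * ∑ j, ‖x j‖ ^ 2 := by
  have hdot : star (H *ᵥ x) ⬝ᵥ (H *ᵥ x) = (c : 𝕜) * (star x ⬝ᵥ x) := by
    rw [star_mulVec, dotProduct_mulVec, vecMul_vecMul, hH, vecMul_smul, vecMul_one,
      smul_dotProduct, smul_eq_mul]
  rw [star_dotProduct_self_eq_sum_norm_sq, star_dotProduct_self_eq_sum_norm_sq] at hdot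
  exact_mod_cast hdot

theorem norm_eq_one_and_norm_mulVec_eq_sqrt_card {𝕜 ι : Type*} [RCLike 𝕜] [Fintype ι]
    [DecidableEq ι] {H : Matrix ι ι 𝕜} (hH : Hᴴ * H = (Fintype.card ι : 𝕜) • 1) {x : ι → 𝕜}
    (hx : ∀ j, ‖x j‖ ≤ 1)
    (hsum : Fintype.card ι * √(Fintype.card ι) ≤ ∑ i, ‖(H *ᵥ x) i‖) :
    (∀ j, ‖x j‖ = 1) ∧ ∀ i, ‖(H *ᵥ x) i‖ = √(Fintype.card ι) := by
  set N : ℝ := (Fintype.card ι : ℝ)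
  have hParseval :=
    sum_norm_sq_mulVec_of_conjTranspose_mul_self (c := N) (by rw [hH, RCLike.ofReal_natCast]) x
  have hx_sq : ∑ j, ‖x j‖ ^ 2 ≤ N := by
    simpa [N] using sum_le_sum fun j (_ : j ∈ univ) => pow_le_one₀ (norm_nonneg (x j)) (hx j)
  have hHx : ∀ i, ‖(H *ᵥ x) i‖ = √N := by
    refine eq_of_sum_sq_le_of_le_sum (Real.sqrt_nonneg N) ?_ hsum
    rw [Real.sq_sqrt (by positivity), hParseval]
    gcongr
  refine ⟨fun j => ?_, hHx⟩
  have hN : 0 < N := by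
    have : Nonempty ι := ⟨j⟩
    positivity
  have hx_sq_eq : ∑ j, ‖x j‖ ^ 2 = ∑ _j : ι, (1 : ℝ) := by
    simp only [hHx, Real.sq_sqrt hN.le, sum_const, card_univ, nsmul_eq_mul] at hParseval
    simpa [N, hN.ne'] using hParseval.symm
  have := (sum_eq_sum_iff_of_le fun j _ => pow_le_one₀ (norm_nonneg _) (hx j)).1 hx_sq_eq j
    (mem_univ j)
  exact (pow_eq_one_iff_of_nonneg (norm_nonneg _) two_ne_zero).1 this

theorem norm_toLpLin_one_top_apply_le {R m n : Type*} [NormedCommRing R] [Fintype m]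
    [Fintype n] [DecidableEq n] {M : Matrix m n R} {C : ℝ} (hC : 0 ≤ C)
    (hM : ∀ i j, ‖M i j‖ ≤ C) (x : WithLp 1 (n → R)) :
    ‖toLpLin 1 ⊤ M x‖ ≤ C * ‖x‖ := by
  rw [toLpLin_apply, PiLp.norm_toLp, PiLp.norm_eq_of_L1, mul_sum]
  refine (pi_norm_le_iff_of_nonneg (by positivity)).2 fun i => ?_
  calc ‖(M *ᵥ WithLp.ofLp x) i‖ ≤ ∑ j, ‖M i j * x j‖ := norm_sum_le _ _
    _ ≤ ∑ j, C * ‖x j‖ := sum_le_sum fun j _ =>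
        (norm_mul_le _ _).trans (mul_le_mul_of_nonneg_right (hM i j) (norm_nonneg _))

noncomputable def toLpEquivOfMulEqOne {𝕜 n : Type*} [NontriviallyNormedField 𝕜]
    [CompleteSpace 𝕜] [Fintype n] [DecidableEq n] (p q : ℝ≥0∞) [Fact (1 ≤ p)] [Fact (1 ≤ q)]
    {M N : Matrix n n 𝕜} (h : M * N = 1) : WithLp p (n → 𝕜) ≃L[𝕜] WithLp q (n → 𝕜) :=
  LinearEquiv.toContinuousLinearEquiv <| .ofLinearMap (toLpLin p q M) (toLpLin q p N)
    (by rw [← toLpLin_mul, h, toLpLin_one])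
    (by rw [← toLpLin_mul, mul_eq_one_comm.mp h, toLpLin_one])

end Matrix

/-- Suppose every ℂ-linear homeomorphism `A : ℓ₁ⁿ(ℂ) → ℓ_∞ⁿ(ℂ)` satisfies
`‖A‖ ⬝ ‖A⁻¹‖ ≥ √n` (so the Banach–Mazur distance between `ℓ₁ⁿ(ℂ)` and `ℓ_∞ⁿ(ℂ)` is `√n`).
Then for every complex `n × n` Hadamard matrix `H` there is a unimodular vector `x ∈ ℂⁿ`
such that every coordinate of `H x` has modulus `√n`. -/
theorem stmt_11 (n : ℕ) (hn : 1 ≤ n)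
    (hBM : ∀ A : PiLp 1 (fun _ : Fin n => ℂ) ≃L[ℂ] PiLp ⊤ (fun _ : Fin n => ℂ),
      Real.sqrt n ≤
        ‖(A : PiLp 1 (fun _ : Fin n => ℂ) →L[ℂ] PiLp ⊤ (fun _ : Fin n => ℂ))‖ *
          ‖(A.symm : PiLp ⊤ (fun _ : Fin n => ℂ) →L[ℂ] PiLp 1 (fun _ : Fin n => ℂ))‖)
    (H : Matrix (Fin n) (Fin n) ℂ)
    (hmod : ∀ i j, ‖H i j‖ = 1)
    (horth : ∀ j k, j ≠ k → ∑ i, H i j * (starRingEnd ℂ) (H i k) = 0) :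
    ∃ x : Fin n → ℂ, (∀ i, ‖x i‖ = 1) ∧
      ∀ i, ‖H.mulVec x i‖ = Real.sqrt n := by
  have hH : Hᴴ * H = (n : ℂ) • 1 := by
    simpa using conjTranspose_mul_self_eq_card_smul_one hmod horth
  have hn0 : (n : ℂ) ≠ 0 := Nat.cast_ne_zero.2 (by omega)
  let A := toLpEquivOfMulEqOne 1 ⊤ (M := (n : ℂ)⁻¹ • Hᴴ) (N := H)
    (by rw [smul_mul, hH, smul_smul, inv_mul_cancel₀ hn0, one_smul])
  have hA : ‖A.toContinuousLinearMap‖ ≤ (n : ℝ)⁻¹ :=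
    ContinuousLinearMap.opNorm_le_bound _ (by positivity) <|
      norm_toLpLin_one_top_apply_le (by positivity) fun i j => by simp [hmod]
  obtain ⟨x, hx, hAx⟩ := A.symm.toContinuousLinearMap.exists_norm_le_one_opNorm_le_norm_apply
  have hsum : (n : ℝ) * √n ≤ ∑ i, ‖(H *ᵥ WithLp.ofLp x) i‖ := by
    have hBMx : √n ≤ (n : ℝ)⁻¹ * ‖A.symm x‖ :=
      (hBM A).trans (mul_le_mul hA hAx (norm_nonneg _) (by positivity))
    rw [← div_eq_inv_mul, le_div_iff₀' (by positivity)] at hBMx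
    exact hBMx.trans_eq (PiLp.norm_eq_of_L1 _)
  obtain ⟨hx_unimodular, hHx⟩ := norm_eq_one_and_norm_mulVec_eq_sqrt_card (by simpa using hH)
    (fun j => (PiLp.norm_apply_le x j).trans hx) (by simpa using hsum)
  exact ⟨WithLp.ofLp x, hx_unimodular, by simpa using hHx⟩
end

section
/- Let ω = exp(2πi/3) and let a_j = (1, ω^j, 0) ∈ ℂ³ for j = 1, 2, 3. Then for every unimodular vector x ∈ ℂ³ there exists j ∈ {1, 2, 3} such that |⟨x, a_j⟩| ≥ √3. -/
open Complex

open scoped ComplexConjugate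

/-!
Write `a = x 0`, `b = x 1` and `z = a * conj b`. Since `‖a‖ = ‖b‖ = ‖ω‖ = 1`,
`|⟨x, a_j⟩|² = ‖a + b * conj ω ^ j‖² = 2 + 2 Re (z ω^j)`, so it suffices that one of the three
points `z ω^j` of the unit circle has real part at least `1/2`. Their real parts sum to `0` and
their squares sum to `3/2`, and three reals below `1/2` with sum `0` have squares summing to
less than `3/2`.
-/

lemma half_le_of_sum_eq_zero_of_sum_sq_eq {r₁ r₂ r₃ : ℝ} (hsum : r₁ + r₂ + r₃ = 0)
    (hsq : r₁ ^ 2 + r₂ ^ 2 + r₃ ^ 2 = 3 / 2) : 1 / 2 ≤ r₁ ∨ 1 / 2 ≤ r₂ ∨ 1 / 2 ≤ r₃ := by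
  by_contra! h
  obtain ⟨h₁, h₂, h₃⟩ := h
  -- the three positive products `(1/2 - rᵢ)(1 + rᵢ)` sum to `3/2 + (Σ rᵢ)/2 - Σ rᵢ² = 0`
  nlinarith [mul_pos (by linarith : (0:ℝ) < 1 / 2 - r₁) (by linarith : (0:ℝ) < 1 + r₁),
    mul_pos (by linarith : (0:ℝ) < 1 / 2 - r₂) (by linarith : (0:ℝ) < 1 + r₂),
    mul_pos (by linarith : (0:ℝ) < 1 / 2 - r₃) (by linarith : (0:ℝ) < 1 + r₃)]

lemma Complex.re_sq_eq (z : ℂ) : z.re ^ 2 = ((z ^ 2).re + normSq z) / 2 := by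
  simp only [sq, mul_re, normSq_apply]
  ring

lemma IsPrimitiveRoot.exists_half_le_re_mul_pow {ω z : ℂ} (hω : IsPrimitiveRoot ω 3)
    (hz : ‖z‖ = 1) : ∃ j ∈ ({1, 2, 3} : Finset ℕ), 1 / 2 ≤ (z * ω ^ j).re := by
  have hω3 : ω ^ 3 = 1 := hω.pow_eq_one
  have hωsum : 1 + ω + ω ^ 2 = 0 := by
    simpa [Finset.sum_range_succ] using hω.geom_sum_eq_zero (by norm_num)
  have hω1 : ‖ω‖ = 1 := hω.norm'_eq_one (by norm_num)
  have hnorm {w : ℂ} (hw : ‖w‖ = 1) : normSq (z * w) = 1 := by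
    rw [normSq_eq_norm_sq, norm_mul, hz, hw, one_mul, one_pow]
  have hsum : z * ω + z * ω ^ 2 + z * ω ^ 3 = 0 := by
    linear_combination z * hωsum + z * hω3
  have hsum_sq : (z * ω) ^ 2 + (z * ω ^ 2) ^ 2 + (z * ω ^ 3) ^ 2 = 0 := by
    linear_combination z ^ 2 * hωsum + z ^ 2 * (ω + ω ^ 3 + 1) * hω3
  have hre := congrArg re hsum
  have hre_sq := congrArg re hsum_sq
  simp only [add_re, zero_re] at hre hre_sq
  rcases half_le_of_sum_eq_zero_of_sum_sq_eq hre (by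
      simp only [re_sq_eq, hnorm, hω1, norm_pow, one_pow]
      linarith) with h | h | h
  · exact ⟨1, by simp, by simpa using h⟩
  · exact ⟨2, by simp, h⟩
  · exact ⟨3, by simp, h⟩

lemma Complex.normSq_add_mul_conj {a b c : ℂ} (ha : ‖a‖ = 1) (hb : ‖b‖ = 1) (hc : ‖c‖ = 1) :
    normSq (a + b * conj c) = 2 + 2 * (a * conj b * c).re := by
  have hnormSq {w : ℂ} (hw : ‖w‖ = 1) : normSq w = 1 := by
    rw [normSq_eq_norm_sq, hw, one_pow]
  rw [normSq_add, normSq_mul, normSq_conj, hnormSq ha, hnormSq hb, hnormSq hc, map_mul,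
    conj_conj, mul_assoc]
  ring

/-- Let `ω = exp(2πi/3)` and `a_j = (1, ω^j, 0)` for `j = 1, 2, 3`. Then for every unimodular
`x ∈ ℂ³` there exists `j ∈ {1, 2, 3}` with `|⟨x, a_j⟩| ≥ √3`. -/
theorem stmt_12 (ω : ℂ) (hω : ω = Complex.exp (2 * Real.pi * Complex.I / 3))
    (x : Fin 3 → ℂ) (hx : ∀ i, ‖x i‖ = 1) :
    ∃ j ∈ ({1, 2, 3} : Finset ℕ),
      Real.sqrt 3 ≤
        ‖∑ i, x i * (starRingEnd ℂ) (![1, ω ^ j, 0] i)‖ := by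
  have hprim : IsPrimitiveRoot ω 3 := by
    simpa [hω] using isPrimitiveRoot_exp 3 (by norm_num)
  have hz : ‖x 0 * conj (x 1)‖ = 1 := by rw [norm_mul, norm_conj, hx 0, hx 1, one_mul]
  obtain ⟨j, hj, hre⟩ := hprim.exists_half_le_re_mul_pow hz
  refine ⟨j, hj, ?_⟩
  have hωj : ‖ω ^ j‖ = 1 := by rw [norm_pow, hprim.norm'_eq_one (by norm_num), one_pow]
  have hsq := normSq_add_mul_conj (hx 0) (hx 1) hωj
  rw [normSq_eq_norm_sq] at hsq
  have hinner : ∑ i, x i * conj (![1, ω ^ j, 0] i) = x 0 + x 1 * conj (ω ^ j) := by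
    simp [Fin.sum_univ_three]
  rw [hinner, Real.sqrt_le_left (norm_nonneg _)]
  linarith
end

section
/- Let a ∈ ℂ³ be a nonzero vector with ‖a‖_∞ ≤ 1. Then there exists a vector v ∈ ℂ³ with ‖v‖_∞ ≤ 1 and at most one coordinate of modulus strictly less than 1, such that for every unimodular vector x ∈ ℂ³, if |⟨a, x⟩| > √3 then |⟨v, x⟩| > √3. -/
open Complex Finset ComplexConjugate

/-!
Write each term of `⟨a, x⟩` as `|aᵢ| zᵢ` with `zᵢ` unimodular and let `k` minimise `|aᵢ|`. Take
`vᵢ = exp (i arg aᵢ)` for `i ≠ k` and `v_k = a_k`. Raising one coefficient `s ≤ 1` to `1` cannot decrease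
`|s z + m|` once `|s z + m| ≥ √3` and `|m| ≤ 1 + s`: the squared norms differ by
`(1 - s)(1 + s + 2 Re(z m̄))`, and the two bounds force the second factor to be nonnegative. Since
`|a_k|` is the smallest coefficient, this bound on `|m|` holds when the two other coefficients are
raised one after the other.
-/

section RealInnerProductSpace

variable {E : Type*} [NormedAddCommGroup E] [InnerProductSpace ℝ E]

theorem norm_smul_add_le_norm_add {z m : E} {s : ℝ} (hs0 : 0 ≤ s) (hs1 : s ≤ 1)
    (hz : ‖z‖ = 1) (hm : ‖m‖ ≤ 1 + s) (h : √3 ≤ ‖s • z + m‖) :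
    ‖s • z + m‖ ≤ ‖z + m‖ := by
  have hsz : ‖s • z + m‖ ^ 2 = s ^ 2 + 2 * s * inner ℝ z m + ‖m‖ ^ 2 := by
    rw [norm_add_sq_real, norm_smul, hz, real_inner_smul_left, Real.norm_of_nonneg hs0]; ring
  have hz' : ‖z + m‖ ^ 2 = 1 + 2 * inner ℝ z m + ‖m‖ ^ 2 := by
    rw [norm_add_sq_real, hz]; ring
  have h3 : 3 ≤ ‖s • z + m‖ ^ 2 := by
    simpa using pow_le_pow_left₀ (Real.sqrt_nonneg 3) h 2
  have hm2 : ‖m‖ ^ 2 ≤ (1 + s) ^ 2 := pow_le_pow_left₀ (norm_nonneg m) hm 2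
  have hsR : 1 - s - s ^ 2 ≤ s * inner ℝ z m := by nlinarith
  have hs : 0 < s := by
    by_contra! hs
    nlinarith [show s = 0 by linarith]
  refine (pow_le_pow_iff_left₀ (norm_nonneg _) (norm_nonneg _) two_ne_zero).1 ?_
  rw [hsz, hz']
  nlinarith [mul_nonneg (sub_nonneg.2 hs1) (sub_nonneg.2 hsR),
    mul_nonneg (sq_nonneg (1 - s)) (by linarith : (0:ℝ) ≤ 2 + s)]

theorem sqrt_three_lt_norm_add_add_smul {z₁ z₂ z₃ : E} {s₁ s₂ s₃ : ℝ}
    (hs₁ : s₁ ≤ 1) (hs₂ : s₂ ≤ 1) (hs₃ : 0 ≤ s₃) (hs₃₁ : s₃ ≤ s₁) (hs₃₂ : s₃ ≤ s₂)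
    (hz₁ : ‖z₁‖ = 1) (hz₂ : ‖z₂‖ = 1) (hz₃ : ‖z₃‖ = 1)
    (h : √3 < ‖s₁ • z₁ + s₂ • z₂ + s₃ • z₃‖) :
    √3 < ‖z₁ + z₂ + s₃ • z₃‖ := by
  have hnorm₃ : ‖s₃ • z₃‖ = s₃ := by rw [norm_smul, hz₃, mul_one, Real.norm_of_nonneg hs₃]
  have hnorm₂ : ‖s₂ • z₂‖ = s₂ := by
    rw [norm_smul, hz₂, mul_one, Real.norm_of_nonneg (by linarith)]
  have h₁ : √3 < ‖z₁ + (s₂ • z₂ + s₃ • z₃)‖ := by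
    rw [add_assoc] at h
    refine h.trans_le (norm_smul_add_le_norm_add (by linarith) hs₁ hz₁ ?_ h.le)
    exact (norm_add_le _ _).trans (by rw [hnorm₂, hnorm₃]; linarith)
  have h₂ : √3 < ‖s₂ • z₂ + (z₁ + s₃ • z₃)‖ := by
    rwa [add_left_comm] at h₁
  have h₃ := h₂.trans_le (norm_smul_add_le_norm_add (by linarith) hs₂ hz₂
    ((norm_add_le _ _).trans (by rw [hz₁, hnorm₃]; linarith)) h₂.le)
  rwa [add_left_comm, ← add_assoc] at h₃

end RealInnerProductSpace

theorem Fin.exists_sum_univ_three_eq_add_add (k : Fin 3) :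
    ∃ i j, i ≠ k ∧ j ≠ k ∧
      ∀ {M : Type*} [AddCommMonoid M] (f : Fin 3 → M), ∑ l, f l = f i + f j + f k :=
  match k with
  | 0 => ⟨1, 2, by decide, by decide, fun f => by rw [Fin.sum_univ_three]; abel⟩
  | 1 => ⟨0, 2, by decide, by decide, fun f => by rw [Fin.sum_univ_three]; abel⟩
  | 2 => ⟨0, 1, by decide, by decide, fun f => Fin.sum_univ_three f⟩

theorem stmt_13_general (a : Fin 3 → ℂ) (ha : ∀ i, ‖a i‖ ≤ 1) :
    ∃ v : Fin 3 → ℂ, (∀ i, ‖v i‖ ≤ 1) ∧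
      (∀ i j, ‖v i‖ < 1 → ‖v j‖ < 1 → i = j) ∧
      ∀ x : Fin 3 → ℂ, (∀ i, ‖x i‖ = 1) →
        Real.sqrt 3 < ‖∑ i, a i * (starRingEnd ℂ) (x i)‖ →
        Real.sqrt 3 < ‖∑ i, v i * (starRingEnd ℂ) (x i)‖ := by
  obtain ⟨k, -, hk⟩ := exists_min_image univ (fun i => ‖a i‖) univ_nonempty
  set phase : Fin 3 → ℂ := fun i => exp (arg (a i) * I)
  have hphase : ∀ i, ‖phase i‖ = 1 := fun i => norm_exp_ofReal_mul_I _
  have hv : ∀ i ≠ k, Function.update phase k (a k) i = phase i :=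
    fun i hi => Function.update_of_ne hi _ _
  refine ⟨Function.update phase k (a k), fun i => ?_, fun i j hi hj => ?_, fun x hx h => ?_⟩
  · rcases eq_or_ne i k with rfl | hik
    · simpa using ha i
    · rw [hv i hik, hphase]
  · have hlt : ∀ i, ‖Function.update phase k (a k) i‖ < 1 → i = k := fun i hi => by
      by_contra hik
      rw [hv i hik, hphase] at hi
      exact hi.false
    exact (hlt i hi).trans (hlt j hj).symm
  · set z : Fin 3 → ℂ := fun i => phase i * conj (x i)
    have hz : ∀ i, ‖z i‖ = 1 := fun i => by simp [z, hphase, hx]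
    have hterm : ∀ i, a i * conj (x i) = ‖a i‖ • z i := fun i => by
      rw [Complex.real_smul, ← mul_assoc, norm_mul_exp_arg_mul_I]
    obtain ⟨i, j, hi, hj, hsum⟩ := Fin.exists_sum_univ_three_eq_add_add k
    rw [hsum] at h ⊢
    rw [hterm, hterm, hterm] at h
    rw [hv i hi, hv j hj, Function.update_self, hterm]
    exact sqrt_three_lt_norm_add_add_smul (ha i) (ha j) (norm_nonneg _)
      (hk i (mem_univ _)) (hk j (mem_univ _)) (hz i) (hz j) (hz k) h

/-- For a nonzero `a ∈ ℂ³` with `‖a‖_∞ ≤ 1` there is `v ∈ ℂ³` with `‖v‖_∞ ≤ 1`, at most one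
coordinate of modulus `< 1`, such that every unimodular `x` with `|⟨a, x⟩| > √3` also satisfies
`|⟨v, x⟩| > √3`. -/
theorem stmt_13 (a : Fin 3 → ℂ) (ha0 : a ≠ 0) (ha : ∀ i, ‖a i‖ ≤ 1) :
    ∃ v : Fin 3 → ℂ, (∀ i, ‖v i‖ ≤ 1) ∧
      (∀ i j, ‖v i‖ < 1 → ‖v j‖ < 1 → i = j) ∧
      ∀ x : Fin 3 → ℂ, (∀ i, ‖x i‖ = 1) →
        Real.sqrt 3 < ‖∑ i, a i * (starRingEnd ℂ) (x i)‖ →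
        Real.sqrt 3 < ‖∑ i, v i * (starRingEnd ℂ) (x i)‖ :=
  stmt_13_general a ha
end

section
/- Let ω = exp(2πi/3). For any nonzero vector a = (a₁, a₂, a₃) ∈ ℂ³ with ‖a‖_∞ ≤ 1, there exists a unimodular vector x = (x₁, x₂, x₃) ∈ ℂ³ such that, setting v = (a₁x₁, a₂x₂, a₃x₃), there is at most one pair (k, l) ∈ {0, 1, 2}² with |⟨v, (1, ω^k, ω^l)⟩| > √3. -/
/-!
Put `rᵢ = ‖aᵢ‖` and `Sₖₗ(v) = v₀ + v₁ ω̄ᵏ + v₂ ω̄ˡ`. It suffices to find `v` with `‖vᵢ‖ = rᵢ` and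
`|Sₖₗ(v)| ≤ √3` for all `(k, l) ≠ (1, 2)`, and then to put `xᵢ = vᵢ / aᵢ`. The numbers `1, ω̄ᵏ, ω̄ˡ`
are cube roots of unity, so any two of them make an angle of at most `2π/3`.

If some `rⱼ` is at least the sum of the other two, take `vⱼ = rⱼ` and `vᵢ = -rᵢ` otherwise: expanding
the square, that angle bound gives `|Sₖₗ(v)| ≤ √3` for all nine pairs. Otherwise the `rᵢ` are the
sides of a triangle, and we close it: `v₀ + v₁ + v₂ = 0`. Seven of the sums then reduce to `vᵢ (1 - ζ)`
with `ζ³ = 1`. Of the other two, we orient the triangle so that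
`|S₂₁(v)|² = 3/2 · Σ rᵢ² - 6√3 · area`, and Heron's formula together with `rᵢ ≤ 1` bounds this by `3`.
-/

open Complex Finset

open scoped RealInnerProductSpace

theorem exists_norm_eq_one_mul_eq {𝕜 ι : Type*} [NormedField 𝕜] {a v : ι → 𝕜}
    (h : ∀ i, ‖v i‖ = ‖a i‖) : ∃ x : ι → 𝕜, (∀ i, ‖x i‖ = 1) ∧ ∀ i, a i * x i = v i := by
  classical
  refine ⟨fun i => if a i = 0 then 1 else v i / a i, fun i => ?_, fun i => ?_⟩ <;>
    by_cases ha : a i = 0 <;> simp only [ha, if_true, if_false]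
  · exact norm_one
  · rw [norm_div, h i, div_self (norm_ne_zero_iff.2 ha)]
  · rw [zero_mul, eq_comm, ← norm_eq_zero, h i, ha, norm_zero]
  · exact mul_div_cancel₀ _ ha

theorem norm_smul_sub_smul_sub_smul_le_sqrt_three {E : Type*} [NormedAddCommGroup E]
    [InnerProductSpace ℝ E] {e₀ e₁ e₂ : E} (h₀ : ‖e₀‖ = 1) (h₁ : ‖e₁‖ = 1) (h₂ : ‖e₂‖ = 1)
    (h₀₁ : -(1 / 2) ≤ ⟪e₀, e₁⟫) (h₀₂ : -(1 / 2) ≤ ⟪e₀, e₂⟫) {p q r : ℝ} (hq : 0 ≤ q)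
    (hr : 0 ≤ r) (hqr : q + r ≤ p) (hp : p ≤ 1) : ‖p • e₀ - q • e₁ - r • e₂‖ ≤ √3 := by
  have h₁₂ : ⟪e₁, e₂⟫ ≤ 1 := by simpa [h₁, h₂] using real_inner_le_norm e₁ e₂
  rw [Real.le_sqrt (norm_nonneg _) zero_le_three, ← real_inner_self_eq_norm_sq]
  simp only [inner_sub_left, inner_sub_right, real_inner_smul_left, real_inner_smul_right,
    real_inner_self_eq_norm_sq, norm_smul, Real.norm_eq_abs, h₀, h₁, h₂, mul_one, sq_abs,
    real_inner_comm e₀ e₁, real_inner_comm e₀ e₂, real_inner_comm e₁ e₂]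
  have hp₀ : 0 ≤ p := by linarith
  -- the square is at most `p² + p (q + r) + (q + r)² ≤ 3 p²`
  nlinarith [mul_nonneg (mul_nonneg hp₀ hq) (by linarith : 0 ≤ ⟪e₀, e₁⟫ + 1 / 2),
    mul_nonneg (mul_nonneg hp₀ hr) (by linarith : 0 ≤ ⟪e₀, e₂⟫ + 1 / 2),
    mul_nonneg (mul_nonneg hq hr) (by linarith : 0 ≤ 1 - ⟪e₁, e₂⟫),
    mul_le_mul hqr hqr (by linarith) hp₀]

theorem norm_sum_signed_smul_le_sqrt_three {E : Type*} [NormedAddCommGroup E]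
    [InnerProductSpace ℝ E] {e : Fin 3 → E} (he : ∀ i, ‖e i‖ = 1)
    (he' : ∀ i j, -(1 / 2) ≤ ⟪e i, e j⟫) {r : Fin 3 → ℝ} (hr₀ : ∀ i, 0 ≤ r i)
    (hr₁ : ∀ i, r i ≤ 1) {j : Fin 3} (hj : ∑ i, r i ≤ 2 * r j) :
    ‖∑ i, (if i = j then r i else -r i) • e i‖ ≤ √3 := by
  rw [Fin.sum_univ_three] at hj ⊢
  fin_cases j <;> simp only [Fin.reduceFinMk, Fin.isValue, if_true, Fin.reduceEq, if_false,
    neg_smul] at hj ⊢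
  · convert norm_smul_sub_smul_sub_smul_le_sqrt_three (he 0) (he 1) (he 2) (he' 0 1) (he' 0 2)
      (hr₀ 1) (hr₀ 2) (by linarith) (hr₁ 0) using 2
    abel
  · convert norm_smul_sub_smul_sub_smul_le_sqrt_three (he 1) (he 0) (he 2) (he' 1 0) (he' 1 2)
      (hr₀ 0) (hr₀ 2) (by linarith) (hr₁ 1) using 2
    abel
  · convert norm_smul_sub_smul_sub_smul_le_sqrt_three (he 2) (he 0) (he 1) (he' 2 0) (he' 2 1)
      (hr₀ 0) (hr₀ 1) (by linarith) (hr₁ 2) using 2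
    abel

theorem Complex.neg_half_le_re_of_pow_three_eq_one {z : ℂ} (hz : z ^ 3 = 1) :
    -(1 / 2) ≤ z.re := by
  rcases eq_or_ne z 1 with rfl | hz1
  · norm_num
  have h : z ^ 2 + z + 1 = 0 := by
    apply mul_left_cancel₀ (sub_ne_zero.2 hz1)
    linear_combination hz
  have hre := congrArg re h
  have him := congrArg im h
  simp only [pow_two, add_re, add_im, mul_re, mul_im, one_re, one_im, zero_re, zero_im] at hre him
  rcases mul_eq_zero.1 (show z.im * (2 * z.re + 1) = 0 by linarith) with h | h
  · rw [h] at hre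
    nlinarith [sq_nonneg (z.re + 1 / 2)]
  · linarith

theorem Complex.norm_eq_one_of_pow_three_eq_one {z : ℂ} (hz : z ^ 3 = 1) : ‖z‖ = 1 :=
  (pow_eq_one_iff_of_nonneg (norm_nonneg z) three_ne_zero).1 (by rw [← norm_pow, hz, norm_one])

theorem Complex.neg_half_le_inner_of_pow_three_eq_one {u w : ℂ} (hu : u ^ 3 = 1)
    (hw : w ^ 3 = 1) : -(1 / 2) ≤ ⟪u, w⟫ := by
  rw [Complex.inner]
  exact neg_half_le_re_of_pow_three_eq_one (by rw [mul_pow, ← map_pow, hu, hw, map_one, one_mul])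

theorem Complex.norm_one_sub_le_sqrt_three {u : ℂ} (hu : u ^ 3 = 1) : ‖1 - u‖ ≤ √3 := by
  have hre := neg_half_le_re_of_pow_three_eq_one hu
  have h₁ := Complex.sq_norm u
  rw [norm_eq_one_of_pow_three_eq_one hu, normSq_apply] at h₁
  rw [Real.le_sqrt (norm_nonneg _) zero_le_three, Complex.sq_norm, normSq_apply]
  simp only [sub_re, sub_im, one_re, one_im]
  nlinarith

theorem Complex.conj_pow_pow_three_eq_one {ω : ℂ} (hω : ω ^ 3 = 1) (n : ℕ) :
    starRingEnd ℂ (ω ^ n) ^ 3 = 1 := by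
  rw [← map_pow, ← pow_mul, mul_comm, pow_mul, hω, one_pow, map_one]

theorem Complex.exp_two_pi_mul_I_div_three :
    cexp (2 * Real.pi * I / 3) = -(1 / 2) + √3 / 2 * I := by
  have h : 2 * Real.pi / 3 = Real.pi - Real.pi / 3 := by ring
  rw [show 2 * Real.pi * I / 3 = ((2 * Real.pi / 3 : ℝ) : ℂ) * I by push_cast; ring,
    exp_mul_I, ← ofReal_cos, ← ofReal_sin, h, Real.cos_pi_sub, Real.sin_pi_sub,
    Real.cos_pi_div_three, Real.sin_pi_div_three]
  push_cast
  ring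

theorem norm_sum_signed_mul_conj_le_sqrt_three {ω : ℂ} (hω : ω ^ 3 = 1) {r : Fin 3 → ℝ}
    (hr₀ : ∀ i, 0 ≤ r i) (hr₁ : ∀ i, r i ≤ 1) {j : Fin 3} (hj : ∑ i, r i ≤ 2 * r j)
    (k l : Fin 3) :
    ‖∑ i, ((if i = j then r i else -r i : ℝ) : ℂ) *
      starRingEnd ℂ (![1, ω ^ (k : ℕ), ω ^ (l : ℕ)] i)‖ ≤ √3 := by
  have he : ∀ i, starRingEnd ℂ (![1, ω ^ (k : ℕ), ω ^ (l : ℕ)] i) ^ 3 = 1 := by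
    intro i
    fin_cases i
    · simp
    · exact conj_pow_pow_three_eq_one hω _
    · exact conj_pow_pow_three_eq_one hω _
  simp only [← real_smul]
  exact norm_sum_signed_smul_le_sqrt_three (fun i => norm_eq_one_of_pow_three_eq_one (he i))
    (fun i i' => neg_half_le_inner_of_pow_three_eq_one (he i) (he i')) hr₀ hr₁ hj

theorem norm_add_mul_add_mul_le_sqrt_three {v₀ v₁ v₂ u w : ℂ} (hv : v₀ + v₁ + v₂ = 0)
    (h₀ : ‖v₀‖ ≤ 1) (h₁ : ‖v₁‖ ≤ 1) (h₂ : ‖v₂‖ ≤ 1) (hu : u ^ 3 = 1) (hw : w ^ 3 = 1)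
    (huw : u = w ∨ u = 1 ∨ w = 1) : ‖v₀ + v₁ * u + v₂ * w‖ ≤ √3 := by
  obtain ⟨c, t, hc, ht, hS⟩ :
      ∃ c t : ℂ, ‖c‖ ≤ 1 ∧ t ^ 3 = 1 ∧ v₀ + v₁ * u + v₂ * w = c * (1 - t) := by
    rcases huw with rfl | rfl | rfl
    · exact ⟨v₀, u, h₀, hu, by linear_combination u * hv⟩
    · exact ⟨-v₂, w, by rwa [norm_neg], hw, by linear_combination hv⟩
    · exact ⟨-v₁, u, by rwa [norm_neg], hu, by linear_combination hv⟩
  rw [hS, norm_mul]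
  calc ‖c‖ * ‖1 - t‖ ≤ 1 * √3 := by
        gcongr
        exact norm_one_sub_le_sqrt_three ht
    _ = √3 := one_mul _

theorem norm_sum_mul_conj_le_sqrt_three_of_sum_eq_zero {ω : ℂ} (hω : ω ^ 3 = 1)
    {v : Fin 3 → ℂ} (hv : ∀ i, ‖v i‖ ≤ 1) (hsum : v 0 + v 1 + v 2 = 0)
    (h₂₁ : ‖v 0 + v 1 * starRingEnd ℂ ω ^ 2 + v 2 * starRingEnd ℂ ω‖ ≤ √3) {k l : Fin 3}
    (hkl : (k, l) ≠ (1, 2)) :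
    ‖∑ i, v i * starRingEnd ℂ (![1, ω ^ (k : ℕ), ω ^ (l : ℕ)] i)‖ ≤ √3 := by
  rw [Fin.sum_univ_three]
  simp only [Matrix.cons_val_zero, Matrix.cons_val_one, Matrix.cons_val_two, Matrix.head_cons,
    Matrix.tail_cons, map_one, mul_one]
  have hcases : k = l ∨ k = 0 ∨ l = 0 ∨ (k = 2 ∧ l = 1) := by
    revert k l; decide
  have hk := conj_pow_pow_three_eq_one hω k
  have hl := conj_pow_pow_three_eq_one hω l
  rcases hcases with rfl | rfl | rfl | ⟨rfl, rfl⟩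
  · exact norm_add_mul_add_mul_le_sqrt_three hsum (hv 0) (hv 1) (hv 2) hk hl (Or.inl rfl)
  · exact norm_add_mul_add_mul_le_sqrt_three hsum (hv 0) (hv 1) (hv 2) hk hl
      (Or.inr (Or.inl (by simp)))
  · exact norm_add_mul_add_mul_le_sqrt_three hsum (hv 0) (hv 1) (hv 2) hk hl
      (Or.inr (Or.inr (by simp)))
  · simpa using h₂₁

theorem sq_add_add_sub_two_le {x y z : ℝ} (hx : x ≤ 1) (hy : y ≤ 1) (hz : z ≤ 1)
    (h : 2 ≤ x + y + z) :
    (x + y + z - 2) ^ 2 ≤ 3 * (2 * x * y + 2 * y * z + 2 * z * x - x ^ 2 - y ^ 2 - z ^ 2) := by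
  nlinarith [mul_nonneg (sub_nonneg.2 hx) (sub_nonneg.2 hy),
    mul_nonneg (sub_nonneg.2 hy) (sub_nonneg.2 hz), mul_nonneg (sub_nonneg.2 hz) (sub_nonneg.2 hx),
    mul_nonneg (sub_nonneg.2 hx) (sub_nonneg.2 h), mul_nonneg (sub_nonneg.2 hy) (sub_nonneg.2 h),
    mul_nonneg (sub_nonneg.2 hz) (sub_nonneg.2 h), sq_nonneg (x - y), sq_nonneg (y - z),
    sq_nonneg (z - x)]

theorem Complex.exists_norm_eq_norm_ofReal_add_eq {a b c : ℝ} (ha : 0 < a) (hb : 0 ≤ b)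
    (hc : 0 ≤ c) (hab : b ≤ a + c) (hbc : c ≤ a + b) (hca : a ≤ b + c) :
    ∃ z : ℂ, ‖z‖ = b ∧ ‖(a : ℂ) + z‖ = c ∧ 0 ≤ z.im := by
  set x := (c ^ 2 - a ^ 2 - b ^ 2) / (2 * a) with hx_def
  have hx : 2 * a * x = c ^ 2 - a ^ 2 - b ^ 2 := by rw [hx_def]; field_simp
  have hxb : x ^ 2 ≤ b ^ 2 := by
    have : 0 ≤ ((a + b) ^ 2 - c ^ 2) * (c ^ 2 - (a - b) ^ 2) := by
      apply mul_nonneg <;> nlinarith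
    nlinarith [mul_pos ha ha]
  refine ⟨x + √(b ^ 2 - x ^ 2) * I, ?_, ?_, by simp [Real.sqrt_nonneg]⟩
  · rw [norm_add_mul_I, Real.sq_sqrt (by linarith), add_sub_cancel, Real.sqrt_sq hb]
  · rw [← add_assoc, ← ofReal_add, norm_add_mul_I, Real.sq_sqrt (by linarith)]
    rw [show (a + x) ^ 2 + (b ^ 2 - x ^ 2) = c ^ 2 by linear_combination hx, Real.sqrt_sq hc]

theorem sum_sq_sub_two_le_of_norm_eq {r₀ r₁ r₂ : ℝ} {z : ℂ} (hr₀ : 0 ≤ r₀) (h₀ : r₀ ≤ 1)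
    (h₁ : r₁ ≤ 1) (h₂ : r₂ ≤ 1) (hz : ‖z‖ = r₁) (hz' : ‖(r₀ : ℂ) + z‖ = r₂) (hzim : 0 ≤ z.im) :
    r₀ ^ 2 + r₁ ^ 2 + r₂ ^ 2 - 2 ≤ 2 * √3 * (r₀ * z.im) := by
  have hprod : 0 ≤ 2 * √3 * (r₀ * z.im) := by positivity
  rcases le_or_gt (r₀ ^ 2 + r₁ ^ 2 + r₂ ^ 2) 2 with h | h
  · linarith
  refine (le_abs_self _).trans (abs_le_of_sq_le_sq ?_ hprod)
  have hr₁ : 0 ≤ r₁ := hz ▸ norm_nonneg z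
  have hr₂ : 0 ≤ r₂ := hz' ▸ norm_nonneg _
  have hz₂ := Complex.sq_norm z
  have hz₂' := Complex.sq_norm ((r₀ : ℂ) + z)
  rw [hz, normSq_apply] at hz₂
  rw [hz', normSq_apply, add_re, add_im, ofReal_re, ofReal_im, zero_add] at hz₂'
  -- `r₀ · Im z` is twice the area of the triangle, so this is Heron's formula
  calc (r₀ ^ 2 + r₁ ^ 2 + r₂ ^ 2 - 2) ^ 2
      ≤ 3 * (2 * r₀ ^ 2 * r₁ ^ 2 + 2 * r₁ ^ 2 * r₂ ^ 2 + 2 * r₂ ^ 2 * r₀ ^ 2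
          - (r₀ ^ 2) ^ 2 - (r₁ ^ 2) ^ 2 - (r₂ ^ 2) ^ 2) :=
        sq_add_add_sub_two_le (by nlinarith) (by nlinarith) (by nlinarith) h.le
    _ = (2 * √3 * (r₀ * z.im)) ^ 2 := by
        rw [mul_pow, mul_pow, Real.sq_sqrt zero_le_three, mul_pow, hz₂, hz₂']
        ring

theorem exists_sum_eq_zero_norm_le_sqrt_three {ζ : ℂ} (hre : ζ.re = -(1 / 2))
    (him : ζ.im = -(√3 / 2)) {r : Fin 3 → ℝ} (hr₀ : ∀ i, 0 ≤ r i) (hr₁ : ∀ i, r i ≤ 1)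
    (htri : ∀ j, 2 * r j < ∑ i, r i) :
    ∃ v : Fin 3 → ℂ, (∀ i, ‖v i‖ = r i) ∧ v 0 + v 1 + v 2 = 0 ∧
      ‖v 0 + v 1 * ζ ^ 2 + v 2 * ζ‖ ≤ √3 := by
  simp only [Fin.sum_univ_three] at htri
  have h₀ := htri 0
  have h₁ := htri 1
  have h₂ := htri 2
  obtain ⟨z, hz, hz', hzim⟩ := exists_norm_eq_norm_ofReal_add_eq (a := r 0) (b := r 1)
    (c := r 2) (by linarith) (hr₀ 1) (hr₀ 2) (by linarith) (by linarith) (by linarith)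
  have harea := sum_sq_sub_two_le_of_norm_eq (hr₀ 0) (hr₁ 0) (hr₁ 1) (hr₁ 2) hz hz' hzim
  refine ⟨![(r 0 : ℂ), z, -(r 0 + z)], fun i => ?_, by simp, ?_⟩
  · fin_cases i
    · simp [abs_of_nonneg (hr₀ 0)]
    · exact hz
    · show ‖-((r 0 : ℂ) + z)‖ = r 2
      rw [norm_neg, hz']
  have h3 : √3 ^ 2 = 3 := Real.sq_sqrt zero_le_three
  have hζ₂ : (ζ ^ 2).re = -(1 / 2) ∧ (ζ ^ 2).im = √3 / 2 := by
    simp only [pow_two, mul_re, mul_im, hre, him]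
    constructor <;> nlinarith
  have hz₂ := Complex.sq_norm z
  have hz₂' := Complex.sq_norm ((r 0 : ℂ) + z)
  rw [hz, normSq_apply] at hz₂
  rw [hz', normSq_apply, add_re, add_im, ofReal_re, ofReal_im, zero_add] at hz₂'
  set S := (r 0 : ℂ) + z * ζ ^ 2 + -(r 0 + z) * ζ
  have hSre : S.re = 3 / 2 * r 0 - √3 * z.im := by
    simp only [S, add_re, add_im, mul_re, neg_re, neg_im, ofReal_re, ofReal_im, hre, him, hζ₂]
    ring
  have hSim : S.im = √3 * (z.re + r 0 / 2) := by
    simp only [S, add_re, add_im, mul_im, neg_re, neg_im, ofReal_re, ofReal_im, hre, him, hζ₂]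
    ring
  change ‖S‖ ≤ √3
  rw [Real.le_sqrt (norm_nonneg _) zero_le_three, Complex.sq_norm, normSq_apply, hSre, hSim]
  linarith [show (√3 * z.im) ^ 2 = 3 * z.im ^ 2 by rw [mul_pow, h3],
    show (√3 * (z.re + r 0 / 2)) ^ 2 = 3 * (z.re + r 0 / 2) ^ 2 by rw [mul_pow, h3]]

theorem exists_norm_eq_forall_norm_sum_le_sqrt_three {ω : ℂ}
    (hω : ω = cexp (2 * Real.pi * I / 3)) {r : Fin 3 → ℝ} (hr₀ : ∀ i, 0 ≤ r i)
    (hr₁ : ∀ i, r i ≤ 1) :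
    ∃ v : Fin 3 → ℂ, (∀ i, ‖v i‖ = r i) ∧ ∀ k l : Fin 3, (k, l) ≠ (1, 2) →
      ‖∑ i, v i * starRingEnd ℂ (![1, ω ^ (k : ℕ), ω ^ (l : ℕ)] i)‖ ≤ √3 := by
  have hω₃ : ω ^ 3 = 1 := by
    simpa [hω] using (isPrimitiveRoot_exp 3 three_ne_zero).pow_eq_one
  by_cases hdom : ∃ j, ∑ i, r i ≤ 2 * r j
  · obtain ⟨j, hj⟩ := hdom
    refine ⟨fun i => ((if i = j then r i else -r i : ℝ) : ℂ), fun i => ?_,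
      fun k l _ => norm_sum_signed_mul_conj_le_sqrt_three hω₃ hr₀ hr₁ hj k l⟩
    by_cases hij : i = j <;> simp [hij, abs_of_nonneg, hr₀]
  simp only [not_exists, not_le] at hdom
  obtain ⟨v, hv, hsum, h₂₁⟩ := exists_sum_eq_zero_norm_le_sqrt_three (ζ := starRingEnd ℂ ω)
    (by rw [conj_re, hω, exp_two_pi_mul_I_div_three]; simp)
    (by rw [conj_im, hω, exp_two_pi_mul_I_div_three]; simp) hr₀ hr₁ hdom
  exact ⟨v, hv, fun k l hkl => norm_sum_mul_conj_le_sqrt_three_of_sum_eq_zero hω₃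
    (fun i => (hv i).trans_le (hr₁ i)) hsum h₂₁ hkl⟩

theorem stmt_14_general (ω : ℂ) (hω : ω = Complex.exp (2 * Real.pi * Complex.I / 3))
    (a : Fin 3 → ℂ) (ha : ∀ i, ‖a i‖ ≤ 1) :
    ∃ x : Fin 3 → ℂ, (∀ i, ‖x i‖ = 1) ∧
      ∀ k l k' l' : Fin 3,
        Real.sqrt 3 < ‖(∑ i, (a i * x i) *
          (starRingEnd ℂ) (![1, ω ^ (k : ℕ), ω ^ (l : ℕ)] i))‖ →
        Real.sqrt 3 < ‖(∑ i, (a i * x i) *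
          (starRingEnd ℂ) (![1, ω ^ (k' : ℕ), ω ^ (l' : ℕ)] i))‖ →
        k = k' ∧ l = l' := by
  obtain ⟨v, hv, hv_le⟩ := exists_norm_eq_forall_norm_sum_le_sqrt_three hω
    (r := fun i => ‖a i‖) (fun i => norm_nonneg _) ha
  obtain ⟨x, hx, hax⟩ := exists_norm_eq_one_mul_eq hv
  refine ⟨x, hx, fun k l k' l' h h' => ?_⟩
  simp only [hax] at h h'
  have hbad : ∀ {k l : Fin 3},
      √3 < ‖∑ i, v i * starRingEnd ℂ (![1, ω ^ (k : ℕ), ω ^ (l : ℕ)] i)‖ → (k, l) = (1, 2) :=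
    fun h => not_not.1 fun hne => (hv_le _ _ hne).not_gt h
  simpa using (hbad h).trans (hbad h').symm

/-- Let `ω = exp(2πi/3)`. For any nonzero `a ∈ ℂ³` with `‖a‖_∞ ≤ 1` there is a unimodular
`x ∈ ℂ³` such that, with `v = (a₁x₁, a₂x₂, a₃x₃)`, at most one pair `(k, l) ∈ {0,1,2}²`
satisfies `|⟨v, (1, ω^k, ω^l)⟩| > √3`. -/
theorem stmt_14 (ω : ℂ) (hω : ω = Complex.exp (2 * Real.pi * Complex.I / 3))
    (a : Fin 3 → ℂ) (ha0 : a ≠ 0) (ha : ∀ i, ‖a i‖ ≤ 1) :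
    ∃ x : Fin 3 → ℂ, (∀ i, ‖x i‖ = 1) ∧
      ∀ k l k' l' : Fin 3,
        Real.sqrt 3 < ‖(∑ i, (a i * x i) *
          (starRingEnd ℂ) (![1, ω ^ (k : ℕ), ω ^ (l : ℕ)] i))‖ →
        Real.sqrt 3 < ‖(∑ i, (a i * x i) *
          (starRingEnd ℂ) (![1, ω ^ (k' : ℕ), ω ^ (l' : ℕ)] i))‖ →
        k = k' ∧ l = l' :=
  stmt_14_general ω hω a ha
end

section
/- Let ω = exp(2πi/3) and let a = (a₁, a₂, a₃) ∈ ℂ³ be a vector with ‖a‖_∞ ≤ 1 such that |⟨a, (1, ω^k, 1)⟩| > √3 for every k ∈ {0, 1, 2}. Then |a₂| < 1. -/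
/-!
If `‖a₂‖ = 1`, put `s = a₁ + a₃`, so `‖s‖ ≤ 2` and
`‖⟨a, (1, ωᵏ, 1)⟩‖² = ‖s‖² + 1 + 2 re (s ā₂ ωᵏ)`. For any `z`, the three reals `re (z ωᵏ)` sum
to `0` and their squares sum to `3‖z‖²/2`, which forces one of them to be `≤ -‖z‖/2`; take
`z = s ā₂`. For that `k` the inner product has squared norm at most `‖s‖² - ‖s‖ + 1 ≤ 3`.
-/

open Complex Finset
open scoped ComplexConjugate

theorem Complex.two_mul_re_sq (w : ℂ) : 2 * w.re ^ 2 = ‖w‖ ^ 2 + (w ^ 2).re := by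
  rw [Complex.sq_norm, normSq_apply, pow_two w, mul_re]
  ring

theorem IsPrimitiveRoot.exists_re_mul_pow_le_neg_half_norm {ω : ℂ} (hω : IsPrimitiveRoot ω 3)
    (z : ℂ) : ∃ k : Fin 3, (z * ω ^ (k : ℕ)).re ≤ -‖z‖ / 2 := by
  have hsum : 1 + ω + ω ^ 2 = 0 := by
    simpa [Finset.sum_range_succ] using hω.geom_sum_eq_zero (by norm_num)
  have hnorm : ∀ k : ℕ, ‖z * ω ^ k‖ = ‖z‖ := fun k => by
    rw [norm_mul, norm_pow, hω.norm'_eq_one (by norm_num), one_pow, mul_one]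
  have hre_sum : (z * ω ^ 0).re + (z * ω ^ 1).re + (z * ω ^ 2).re = 0 := by
    rw [← add_re, ← add_re, ← zero_re]
    congr 1
    linear_combination z * hsum
  have hre_sq_sum :
      ((z * ω ^ 0) ^ 2).re + ((z * ω ^ 1) ^ 2).re + ((z * ω ^ 2) ^ 2).re = 0 := by
    rw [← add_re, ← add_re, ← zero_re]
    congr 1
    linear_combination z ^ 2 * hsum + z ^ 2 * ω * hω.pow_eq_one
  by_contra! hlt
  have h0 := hlt 0
  have h1 := hlt 1
  have h2 := hlt 2
  simp only [Fin.val_zero, Fin.val_one, Fin.val_two] at h0 h1 h2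
  have q0 := two_mul_re_sq (z * ω ^ 0)
  have q1 := two_mul_re_sq (z * ω ^ 1)
  have q2 := two_mul_re_sq (z * ω ^ 2)
  simp only [hnorm] at q0 q1 q2
  -- `∑ₖ (xₖ + ‖z‖/2) (‖z‖ - xₖ) = 0` for `xₖ = re (z ωᵏ)`, yet every term would be positive.
  nlinarith [mul_pos (by linarith : 0 < (z * ω ^ 0).re + ‖z‖ / 2)
      (by linarith : 0 < ‖z‖ - (z * ω ^ 0).re),
    mul_pos (by linarith : 0 < (z * ω ^ 1).re + ‖z‖ / 2)
      (by linarith : 0 < ‖z‖ - (z * ω ^ 1).re),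
    mul_pos (by linarith : 0 < (z * ω ^ 2).re + ‖z‖ / 2)
      (by linarith : 0 < ‖z‖ - (z * ω ^ 2).re)]

theorem IsPrimitiveRoot.exists_sq_norm_add_mul_conj_pow_le {ω : ℂ} (hω : IsPrimitiveRoot ω 3)
    (s b : ℂ) : ∃ k : Fin 3,
      ‖s + b * conj (ω ^ (k : ℕ))‖ ^ 2 ≤ ‖s‖ ^ 2 - ‖s‖ * ‖b‖ + ‖b‖ ^ 2 := by
  obtain ⟨k, hk⟩ := hω.exists_re_mul_pow_le_neg_half_norm (s * conj b)
  refine ⟨k, ?_⟩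
  have hexpand : ‖s + b * conj (ω ^ (k : ℕ))‖ ^ 2
      = ‖s‖ ^ 2 + ‖b‖ ^ 2 + 2 * (s * conj b * ω ^ (k : ℕ)).re := by
    simp only [Complex.sq_norm, normSq_add, normSq_conj, map_mul, conj_conj]
    rw [← Complex.sq_norm (ω ^ _), norm_pow, hω.norm'_eq_one (by norm_num)]
    ring_nf
  rw [norm_mul, norm_conj] at hk
  linarith

/-- Let `ω = exp(2πi/3)` and `a ∈ ℂ³` with `‖a‖_∞ ≤ 1` be such that
`|⟨a, (1, ω^k, 1)⟩| > √3` for every `k ∈ {0, 1, 2}`. Then `|a₂| < 1`. -/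
theorem stmt_15 (ω : ℂ) (hω : ω = Complex.exp (2 * Real.pi * Complex.I / 3))
    (a : Fin 3 → ℂ) (ha : ∀ i, ‖a i‖ ≤ 1)
    (h : ∀ k : Fin 3,
      Real.sqrt 3 < ‖∑ i, a i * (starRingEnd ℂ) (![1, ω ^ (k : ℕ), 1] i)‖) :
    ‖a 1‖ < 1 := by
  by_contra! h1
  have hprim : IsPrimitiveRoot ω 3 := by
    rw [hω]; exact_mod_cast Complex.isPrimitiveRoot_exp 3 (by norm_num)
  obtain ⟨k, hk⟩ := hprim.exists_sq_norm_add_mul_conj_pow_le (a 0 + a 2) (a 1)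
  have hs : ‖a 0 + a 2‖ ≤ 2 := (norm_add_le _ _).trans (by linarith [ha 0, ha 2])
  have hinner := h k
  simp only [Fin.sum_univ_three, Matrix.cons_val_zero, Matrix.cons_val_one, Matrix.head_cons,
    Matrix.cons_val_two, Matrix.tail_cons, map_one, mul_one] at hinner
  rw [le_antisymm (ha 1) h1] at hk
  have hsq : 3 < ‖a 0 + a 2 + a 1 * conj (ω ^ (k : ℕ))‖ ^ 2 := by
    rw [add_right_comm]
    simpa using pow_lt_pow_left₀ hinner (Real.sqrt_nonneg 3) two_ne_zero
  nlinarith [norm_nonneg (a 0 + a 2)]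
end

section
/- Let ω = exp(2πi/3). For every vector a ∈ ℂ³ with ‖a‖_∞ ≤ 1, at least one of the four unimodular vectors (1, ω, 1), (1, ω², 1), (1, 1, ω), (1, 1, ω²) ∈ ℂ³, call it y, satisfies |⟨a, y⟩| ≤ √3. -/
/-!
Write `S = a₀ + a₁ + a₂`. Since `conj ω = ω²`, the four inner products are `S + (ζ - 1) aᵢ`
with `ζ ∈ {ω, ω²}` and `i ∈ {1, 2}`. After a rotation we may assume `S = s ≥ 0` is real.
If both `|s + (ω - 1) z| > √3` and `|s + (ω² - 1) z| > √3` for some `|z| ≤ 1`, then `z` lies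
in the unit disc but outside the unit discs about `s (1/2 ± i/(2√3))`, which forces
`Re z < (s - 1)/2`. If this happened for `z = a₁` and `z = a₂`, then
`Re a₀ = s - Re a₁ - Re a₂ > 1`, contradicting `|a₀| ≤ 1`.
-/

open Complex ComplexConjugate

theorem two_mul_lt_sub_one_of_three_lt {c s x y : ℝ} (hc : c ^ 2 = 3) (hs : 0 ≤ s)
    (hxy : x ^ 2 + y ^ 2 ≤ 1)
    (h₁ : 3 < s ^ 2 - 3 * s * x - c * s * y + 3 * (x ^ 2 + y ^ 2))
    (h₂ : 3 < s ^ 2 - 3 * s * x + c * s * y + 3 * (x ^ 2 + y ^ 2)) :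
    2 * x < s - 1 := by
  have hp₁ : 0 < s * (s - 3 * x - c * y) := by linarith
  have hp₂ : 0 < s * (s - 3 * x + c * y) := by linarith
  have hs' : 0 < s := hs.lt_of_ne (by rintro rfl; simp at hp₁)
  have hq₁ : 0 < s - 3 * x - c * y := pos_of_mul_pos_right hp₁ hs
  have hq₂ : 0 < s - 3 * x + c * y := pos_of_mul_pos_right hp₂ hs
  have hsq : 1 ^ 2 < (s - 2 * x) ^ 2 := by
    have key : 3 * (s - 2 * x) ^ 2 = (s ^ 2 - 3 * s * x - c * s * y + 3 * (x ^ 2 + y ^ 2))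
        + (s - 3 * x + c * y) * (s + (s - 3 * x - c * y)) := by
      linear_combination y ^ 2 * hc
    nlinarith [mul_pos hq₂ (add_pos hs' hq₁)]
  linarith [lt_of_pow_lt_pow_left₀ 2 (by linarith) hsq]

theorem normSq_ofReal_add_sub_one_mul {ζ : ℂ} (hre : ζ.re = -1 / 2) (him : ζ.im ^ 2 = 3 / 4)
    (s : ℝ) (z : ℂ) :
    normSq (s + (ζ - 1) * z) = s ^ 2 - 3 * s * z.re - 2 * ζ.im * s * z.im
      + 3 * (z.re ^ 2 + z.im ^ 2) := by
  simp only [normSq_apply, add_re, add_im, mul_re, mul_im, sub_re, sub_im, ofReal_re,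
    ofReal_im, one_re, one_im, hre]
  linear_combination (z.re ^ 2 + z.im ^ 2) * him

namespace IsPrimitiveRoot

variable {ω : ℂ} (hω : IsPrimitiveRoot ω 3)
include hω

theorem conj_eq_sq : conj ω = ω ^ 2 := by
  rw [← RCLike.inv_eq_conj (hω.norm'_eq_one (by norm_num))]
  exact inv_eq_of_mul_eq_one_right (by rw [← pow_succ', hω.pow_eq_one])

theorem re_eq_neg_half : ω.re = -1 / 2 := by
  have h := congr_arg re (hω.geom_sum_eq_zero (by norm_num))
  simp only [Finset.sum_range_succ, Finset.sum_range_zero, ← hω.conj_eq_sq, add_re, pow_zero,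
    pow_one, one_re, conj_re, zero_re] at h
  linarith

theorem im_sq : ω.im ^ 2 = 3 / 4 := by
  have h : normSq ω = 1 := by rw [normSq_eq_norm_sq, hω.norm'_eq_one (by norm_num), one_pow]
  rw [normSq_apply, hω.re_eq_neg_half] at h
  linarith

theorem two_mul_re_lt_of_sqrt_three_lt {s : ℝ} (hs : 0 ≤ s) {z : ℂ} (hz : ‖z‖ ≤ 1)
    (h₁ : √3 < ‖s + (ω - 1) * z‖) (h₂ : √3 < ‖s + (conj ω - 1) * z‖) :
    2 * z.re < s - 1 := by
  have three_lt {w : ℂ} (hw : √3 < ‖w‖) : 3 < normSq w := by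
    rwa [norm_def, Real.sqrt_lt_sqrt_iff (by norm_num)] at hw
  have h₁ := three_lt h₁
  have h₂ := three_lt h₂
  rw [normSq_ofReal_add_sub_one_mul hω.re_eq_neg_half hω.im_sq] at h₁
  rw [normSq_ofReal_add_sub_one_mul (by simpa using hω.re_eq_neg_half)
    (by simpa using hω.im_sq)] at h₂
  have hxy : z.re ^ 2 + z.im ^ 2 ≤ 1 := by
    rw [sq, sq, ← normSq_apply, normSq_eq_norm_sq]
    exact pow_le_one₀ (norm_nonneg z) hz
  exact two_mul_lt_sub_one_of_three_lt (c := 2 * ω.im) (by linear_combination 4 * hω.im_sq) hs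
    hxy (by linarith) (by simp only [conj_im] at h₂; linarith)

theorem exists_norm_add_sub_one_mul_le_sqrt_three {a₀ a₁ a₂ : ℂ} (h₀ : ‖a₀‖ ≤ 1)
    (h₁ : ‖a₁‖ ≤ 1) (h₂ : ‖a₂‖ ≤ 1) :
    ∃ z ∈ ({a₁, a₂} : Set ℂ), ∃ ζ ∈ ({ω, conj ω} : Set ℂ),
      ‖a₀ + a₁ + a₂ + (ζ - 1) * z‖ ≤ √3 := by
  by_contra! h
  set S := a₀ + a₁ + a₂
  obtain ⟨μ, hμ, hμS⟩ := Complex.exists_norm_eq_mul_self S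
  have rotated {z : ℂ} (hz : z ∈ ({a₁, a₂} : Set ℂ)) (hz₁ : ‖z‖ ≤ 1) :
      2 * (μ * z).re < ‖S‖ - 1 := by
    have rotate (ζ : ℂ) : ‖(‖S‖ : ℂ) + (ζ - 1) * (μ * z)‖ = ‖S + (ζ - 1) * z‖ := by
      rw [hμS, show μ * S + (ζ - 1) * (μ * z) = μ * (S + (ζ - 1) * z) by ring, norm_mul, hμ,
        one_mul]
    refine hω.two_mul_re_lt_of_sqrt_three_lt (norm_nonneg S) (by rwa [norm_mul, hμ, one_mul])
      ?_ ?_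
    · rw [rotate]; exact h z hz ω (by simp)
    · rw [rotate]; exact h z hz (conj ω) (by simp)
  have hre : (μ * a₀).re = ‖S‖ - (μ * a₁).re - (μ * a₂).re := by
    rw [← ofReal_re ‖S‖, hμS]; simp only [S, mul_add, add_re]; ring
  have hre₁ := rotated (by simp) h₁
  have hre₂ := rotated (by simp) h₂
  have hre₀ : (μ * a₀).re ≤ 1 := (re_le_norm _).trans (by rwa [norm_mul, hμ, one_mul])
  linarith

end IsPrimitiveRoot

/-- Let `ω = exp(2πi/3)`. For every `a ∈ ℂ³` with `‖a‖_∞ ≤ 1`, at least one of the vectors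
`(1,ω,1)`, `(1,ω²,1)`, `(1,1,ω)`, `(1,1,ω²)` has inner product with `a` of modulus `≤ √3`. -/
theorem stmt_19 (ω : ℂ) (hω : ω = Complex.exp (2 * Real.pi * Complex.I / 3))
    (a : Fin 3 → ℂ) (ha : ∀ i, ‖a i‖ ≤ 1) :
    ∃ y ∈ ({![1, ω, 1], ![1, ω ^ 2, 1], ![1, 1, ω], ![1, 1, ω ^ 2]} : Set (Fin 3 → ℂ)),
      ‖∑ i, a i * (starRingEnd ℂ) (y i)‖ ≤ Real.sqrt 3 := by
  have hprim : IsPrimitiveRoot ω 3 := by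
    subst hω; exact_mod_cast Complex.isPrimitiveRoot_exp 3 (by norm_num)
  have hsum₁ (ζ : ℂ) : ∑ i, a i * conj (![1, ζ, 1] i) = a 0 + a 1 + a 2 + (conj ζ - 1) * a 1 := by
    simp only [Fin.sum_univ_three, Matrix.cons_val_zero, Matrix.cons_val_one, Matrix.cons_val,
      map_one, mul_one]
    ring
  have hsum₂ (ζ : ℂ) : ∑ i, a i * conj (![1, 1, ζ] i) = a 0 + a 1 + a 2 + (conj ζ - 1) * a 2 := by
    simp only [Fin.sum_univ_three, Matrix.cons_val_zero, Matrix.cons_val_one, Matrix.cons_val,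
      map_one, mul_one]
    ring
  have hconj : conj (ω ^ 2) = ω := by rw [← hprim.conj_eq_sq, conj_conj]
  obtain ⟨z, hz, ζ, hζ, h⟩ := hprim.exists_norm_add_sub_one_mul_le_sqrt_three (ha 0) (ha 1) (ha 2)
  obtain rfl | rfl := hz <;> obtain hζ | hζ := hζ <;> subst ζ
  · exact ⟨![1, ω ^ 2, 1], by simp, by rwa [hsum₁, hconj]⟩
  · exact ⟨![1, ω, 1], by simp, by rwa [hsum₁]⟩
  · exact ⟨![1, 1, ω ^ 2], by simp, by rwa [hsum₂, hconj]⟩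
  · exact ⟨![1, 1, ω], by simp, by rwa [hsum₂]⟩
end
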